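/- arXiv:1811.10425 — 7 statements merged into one kernel-verified Lean document; each statement's English description precedes it below -/
import Mathlib

section
/- Let Φ(ρ) = Σ_i V_i ρ V_i* be a quantum channel on M_n with Kraus operators V_i and let Q be a projection. Then the commutant of the set {Q V_j* V_i Q}_{i,j} equals the commutant of the orthogonal complement (in the trace inner product) of ker(Φ^C ∘ P_Q). -/
open Matrix ComplexOrder

/-- The completely positive map with Kraus operators `V i`. -/
noncomputable def krausMap {d n m : ℕ} (V : Fin d → Matrix (Fin m) (Fin n) ℂ) :
    Matrix (Fin n) (Fin n) ℂ →ₗ[ℂ] Matrix (Fin m) (Fin m) ℂ where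
  toFun X := ∑ i, V i * X * (V i)ᴴ
  map_add' X Y := by simp [Matrix.mul_add, Matrix.add_mul, Finset.sum_add_distrib]
  map_smul' c X := by simp [Matrix.mul_smul, Matrix.smul_mul, Finset.smul_sum]

/-- The complementary map `Φ^C(ρ) = ∑_{i,j} tr(ρ V_j* V_i) E_{ij}`. -/
noncomputable def complMap {d n m : ℕ} (V : Fin d → Matrix (Fin m) (Fin n) ℂ) :
    Matrix (Fin n) (Fin n) ℂ →ₗ[ℂ] Matrix (Fin d) (Fin d) ℂ where
  toFun X := Matrix.of fun i j => (X * ((V j)ᴴ * V i)).trace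
  map_add' X Y := by
    ext i j
    simp [Matrix.add_mul]
  map_smul' c X := by
    ext i j
    simp [Matrix.smul_mul]

/-- The compression map `P_Q(X) = Q X Q`. -/
noncomputable def comprMap {n : ℕ} (Q : Matrix (Fin n) (Fin n) ℂ) :
    Matrix (Fin n) (Fin n) ℂ →ₗ[ℂ] Matrix (Fin n) (Fin n) ℂ where
  toFun X := Q * X * Q
  map_add' X Y := by simp [Matrix.mul_add, Matrix.add_mul]
  map_smul' c X := by simp [Matrix.mul_smul, Matrix.smul_mul]

/-- The orthogonal complement of a set of matrices with respect to the trace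
(Hilbert–Schmidt) inner product `⟨A, B⟩ = tr(A* B)`. -/
noncomputable def traceOrthCompl {n : ℕ} (S : Set (Matrix (Fin n) (Fin n) ℂ)) :
    Submodule ℂ (Matrix (Fin n) (Fin n) ℂ) where
  carrier := {X | ∀ A ∈ S, (Aᴴ * X).trace = 0}
  add_mem' := by
    intro a b ha hb A hA
    simp [Matrix.mul_add, ha A hA, hb A hA]
  zero_mem' := by intro A hA; simp
  smul_mem' := by
    intro c x hx A hA
    simp [Matrix.mul_smul, hx A hA]

/-- The commutant of a set of matrices, as a submodule of `M_n`. -/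
noncomputable def commutantSub {n : ℕ} (S : Set (Matrix (Fin n) (Fin n) ℂ)) :
    Submodule ℂ (Matrix (Fin n) (Fin n) ℂ) where
  carrier := {X | ∀ A ∈ S, X * A = A * X}
  add_mem' := by
    intro a b ha hb A hA
    simp [Matrix.mul_add, Matrix.add_mul, ha A hA, hb A hA]
  zero_mem' := by intro A hA; simp
  smul_mem' := by
    intro c x hx A hA
    simp [Matrix.mul_smul, Matrix.smul_mul, hx A hA]

/-- The multiplicative domain of a linear map on `M_n`, as a set. -/
noncomputable def multDomain {n m : ℕ}
    (Φ : Matrix (Fin n) (Fin n) ℂ →ₗ[ℂ] Matrix (Fin m) (Fin m) ℂ) :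
    Set (Matrix (Fin n) (Fin n) ℂ) :=
  {A | ∀ X, Φ (A * X) = Φ A * Φ X ∧ Φ (X * A) = Φ X * Φ A}

/-! The pairing `tr((Q V_j* V_i Q)* X) = tr(Q X Q · V_i* V_j)` identifies `ker (Φ^C ∘ P_Q)` with
the trace-orthogonal complement of `S = {Q V_j* V_i Q}`. Flattening `M_n` isometrically into
a finite-dimensional Euclidean space, the double orthogonal complement of `S` is `span S`, and a
matrix commutes with `span S` exactly when it commutes with `S`. -/

section MatrixEuclidean

variable {𝕜 : Type*} [RCLike 𝕜] {m n : Type*}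

variable (𝕜 m n) in
noncomputable def matrixToEuclidean : Matrix m n 𝕜 ≃ₗ[𝕜] EuclideanSpace 𝕜 (m × n) where
  toFun X := WithLp.toLp 2 fun p => X p.1 p.2
  invFun f := Matrix.of fun i j => f (i, j)
  map_add' _ _ := rfl
  map_smul' _ _ := rfl
  left_inv _ := rfl
  right_inv _ := rfl

@[simp]
theorem matrixToEuclidean_apply (X : Matrix m n 𝕜) (p : m × n) :
    matrixToEuclidean 𝕜 m n X p = X p.1 p.2 :=
  rfl

theorem inner_matrixToEuclidean [Fintype m] [Fintype n] (A X : Matrix m n 𝕜) :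
    inner 𝕜 (matrixToEuclidean 𝕜 m n A) (matrixToEuclidean 𝕜 m n X) = (Aᴴ * X).trace := by
  simp only [PiLp.inner_apply, RCLike.inner_apply, matrixToEuclidean_apply, Matrix.trace,
    Matrix.diag, Matrix.mul_apply, Matrix.conjTranspose_apply, Fintype.sum_prod_type]
  rw [Finset.sum_comm]
  simp [mul_comm, RCLike.star_def]

end MatrixEuclidean

theorem Submodule.mem_orthogonal_span_iff {𝕜 E : Type*} [RCLike 𝕜] [NormedAddCommGroup E]
    [InnerProductSpace 𝕜 E] (T : Set E) (x : E) :
    x ∈ (Submodule.span 𝕜 T)ᗮ ↔ ∀ v ∈ T, inner 𝕜 v x = 0 := by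
  rw [← Submodule.span_singleton_le_iff_mem, ← Submodule.isOrtho_iff_le, Submodule.isOrtho_comm,
    Submodule.isOrtho_span]
  simp only [Set.mem_singleton_iff, forall_eq]

section SquareMatrices

variable {n : ℕ}

theorem traceOrthCompl_eq_comap (S : Set (Matrix (Fin n) (Fin n) ℂ)) :
    traceOrthCompl S =
      ((Submodule.span ℂ S).map (matrixToEuclidean ℂ _ _).toLinearMap)ᗮ.comap
        (matrixToEuclidean ℂ _ _).toLinearMap := by
  ext X
  simp only [Submodule.mem_comap, LinearEquiv.coe_coe, Submodule.map_span,
    Submodule.mem_orthogonal_span_iff, Set.forall_mem_image, inner_matrixToEuclidean]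
  rfl

theorem traceOrthCompl_traceOrthCompl (S : Set (Matrix (Fin n) (Fin n) ℂ)) :
    traceOrthCompl (traceOrthCompl S : Set (Matrix (Fin n) (Fin n) ℂ)) = Submodule.span ℂ S := by
  rw [traceOrthCompl_eq_comap, Submodule.span_eq, traceOrthCompl_eq_comap,
    Submodule.map_comap_eq_of_surjective (LinearEquiv.surjective _), Submodule.orthogonal_orthogonal,
    Submodule.comap_map_eq_of_injective (LinearEquiv.injective _)]

theorem commutantSub_span (S : Set (Matrix (Fin n) (Fin n) ℂ)) :
    commutantSub (Submodule.span ℂ S : Set (Matrix (Fin n) (Fin n) ℂ)) = commutantSub S := by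
  refine le_antisymm (fun X hX A hA => hX A (Submodule.subset_span hA)) fun X hX A hA => ?_
  induction hA using Submodule.span_induction with
  | mem u hu => exact hX u hu
  | zero => simp
  | add u w _ _ hu hw => rw [Matrix.mul_add, Matrix.add_mul, hu, hw]
  | smul c u _ hu => rw [Matrix.mul_smul, Matrix.smul_mul, hu]

end SquareMatrices

theorem Matrix.trace_conjTranspose_compress_mul {R n : Type*} [CommRing R] [StarRing R]
    [Fintype n] {Q : Matrix n n R} (hQ : Qᴴ = Q) (B X : Matrix n n R) :
    ((Q * B * Q)ᴴ * X).trace = (Q * X * Q * Bᴴ).trace := by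
  simp only [Matrix.conjTranspose_mul, hQ, Matrix.mul_assoc]
  rw [← Matrix.mul_assoc Q Bᴴ, Matrix.trace_mul_comm]
  simp only [Matrix.mul_assoc]

theorem ker_complMap_comp_comprMap {d m n : ℕ} (V : Fin d → Matrix (Fin m) (Fin n) ℂ)
    {Q : Matrix (Fin n) (Fin n) ℂ} (hQ : Qᴴ = Q) :
    LinearMap.ker ((complMap V).comp (comprMap Q)) =
      traceOrthCompl (Set.range fun p : Fin d × Fin d => Q * (V p.2)ᴴ * V p.1 * Q) := by
  have pairing (i j : Fin d) (X : Matrix (Fin n) (Fin n) ℂ) :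
      ((Q * (V i)ᴴ * V j * Q)ᴴ * X).trace = complMap V (comprMap Q X) i j := by
    rw [Matrix.mul_assoc Q, Matrix.trace_conjTranspose_compress_mul hQ,
      Matrix.conjTranspose_mul, Matrix.conjTranspose_conjTranspose]
    rfl
  ext X
  simp only [LinearMap.mem_ker, LinearMap.comp_apply, traceOrthCompl, Submodule.mem_mk,
    AddSubmonoid.mem_mk, AddSubsemigroup.mem_mk, Set.mem_ofPred_eq, Set.forall_mem_range,
    Prod.forall, pairing, ← Matrix.ext_iff, Matrix.zero_apply]
  exact forall_comm

theorem stmt_2_general {d n : ℕ} (V : Fin d → Matrix (Fin n) (Fin n) ℂ)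
    (Q : Matrix (Fin n) (Fin n) ℂ) (hQh : Qᴴ = Q) :
    commutantSub (Set.range fun p : Fin d × Fin d => Q * (V p.2)ᴴ * V p.1 * Q) =
      commutantSub
        ((traceOrthCompl
          ((LinearMap.ker ((complMap V).comp (comprMap Q)) :
              Submodule ℂ (Matrix (Fin n) (Fin n) ℂ)) : Set (Matrix (Fin n) (Fin n) ℂ))
            : Submodule ℂ (Matrix (Fin n) (Fin n) ℂ)) : Set (Matrix (Fin n) (Fin n) ℂ)) := by
  rw [ker_complMap_comp_comprMap V hQh, traceOrthCompl_traceOrthCompl, commutantSub_span]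

/-- the commutant of `{Q V_j* V_i Q}` equals the commutant of the
trace-orthogonal complement of `ker (Φ^C ∘ P_Q)`. -/
theorem stmt_2 {d n : ℕ} (V : Fin d → Matrix (Fin n) (Fin n) ℂ)
    (hV : ∑ i, (V i)ᴴ * V i = 1)
    (Q : Matrix (Fin n) (Fin n) ℂ) (hQ : Q * Q = Q) (hQh : Qᴴ = Q) :
    commutantSub (Set.range fun p : Fin d × Fin d => Q * (V p.2)ᴴ * V p.1 * Q) =
      commutantSub
        ((traceOrthCompl
          ((LinearMap.ker ((complMap V).comp (comprMap Q)) :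
              Submodule ℂ (Matrix (Fin n) (Fin n) ℂ)) : Set (Matrix (Fin n) (Fin n) ℂ))
            : Submodule ℂ (Matrix (Fin n) (Fin n) ℂ)) : Set (Matrix (Fin n) (Fin n) ℂ)) :=
  stmt_2_general V Q hQh
end

section
/- Let Φ be a quantum channel on M_n with Kraus operators {V_i}, let Q be a projection, and let A be a *-subalgebra of Q M_n Q. If every element X of A commutes with every operator Q V_j* V_i Q, then A is private for the complementary channel Φ^C with respect to Q; that is, for every Y, the operator Q (Φ^C)†(Y) Q commutes with every element of A. -/
open Matrix ComplexOrder

lemma trace_ext {n : ℕ} (M N : Matrix (Fin n) (Fin n) ℂ)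
    (h : ∀ ρ : Matrix (Fin n) (Fin n) ℂ, (ρ * M).trace = (ρ * N).trace) : M = N := by
  ext a b
  have := h (Matrix.single b a 1)
  simpa [Matrix.trace, Matrix.diag, Matrix.mul_apply, Matrix.single,
    ite_and, Finset.sum_ite_eq, Finset.sum_ite_eq'] using this

/-- if every element of the *-subalgebra `A ⊆ Q M_n Q` commutes with every
`Q V_j* V_i Q`, then `A` is private for `Φ^C` with respect to `Q`: every `Q (Φ^C)†(Y) Q`
commutes with every element of `A`. -/
theorem stmt_3 {d n : ℕ} (V : Fin d → Matrix (Fin n) (Fin n) ℂ)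
    (hV : ∑ i, (V i)ᴴ * V i = 1)
    (Q : Matrix (Fin n) (Fin n) ℂ) (hQ : Q * Q = Q) (hQh : Qᴴ = Q)
    (A : NonUnitalStarSubalgebra ℂ (Matrix (Fin n) (Fin n) ℂ))
    (hAQ : ∀ X ∈ A, Q * X * Q = X)
    (Ψ : Matrix (Fin d) (Fin d) ℂ →ₗ[ℂ] Matrix (Fin n) (Fin n) ℂ)
    (hΨ : ∀ (ρ : Matrix (Fin n) (Fin n) ℂ) (Y : Matrix (Fin d) (Fin d) ℂ),
      (complMap V ρ * Y).trace = (ρ * Ψ Y).trace)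
    (hcomm : ∀ X ∈ A, ∀ i j, X * (Q * (V j)ᴴ * V i * Q) = (Q * (V j)ᴴ * V i * Q) * X) :
    ∀ (Y : Matrix (Fin d) (Fin d) ℂ), ∀ X ∈ A,
      (Q * Ψ Y * Q) * X = X * (Q * Ψ Y * Q) := by
  intro Y X hX
  have hΨY : Ψ Y = ∑ i, ∑ j, Y j i • ((V j)ᴴ * V i) := by
    apply trace_ext
    intro ρ
    rw [← hΨ ρ Y]
    simp only [Matrix.mul_sum, Matrix.mul_smul, Matrix.trace_sum, Matrix.trace_smul]
    rw [Matrix.trace_mul_comm]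
    simp [complMap, Matrix.trace, Matrix.diag, Matrix.mul_apply, Finset.mul_sum,
      mul_comm, ← Matrix.mul_assoc]
    rw [Finset.sum_comm]
  have key : Q * Ψ Y * Q = ∑ i, ∑ j, Y j i • (Q * (V j)ᴴ * V i * Q) := by
    rw [hΨY]
    simp [Matrix.mul_sum, Matrix.sum_mul, Matrix.mul_smul, Matrix.smul_mul,
      Matrix.mul_assoc]
  rw [key, Finset.sum_mul, Finset.mul_sum]
  refine Finset.sum_congr rfl fun i _ => ?_
  rw [Finset.sum_mul, Finset.mul_sum]
  refine Finset.sum_congr rfl fun j _ => ?_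
  rw [Matrix.smul_mul, Matrix.mul_smul, hcomm X hX i j]
end

section
/- Let Φ be a completely positive trace-preserving map on M_n, let A be a *-subalgebra of M_n, and let π : A → M_n be a linear multiplicative *-preserving map such that Φ(AX) = π(A)Φ(X) for all A ∈ A and all X ∈ M_n. Then Φ†(π(A)) = A for all A ∈ A, where Φ† is the trace-inner-product adjoint of Φ. -/
open Matrix ComplexOrder

/-! If `Φ(aX) = PΦ(X)` and `Φ(aᴴX) = PᴴΦ(X)`, then the Kraus operators intertwine `a` and `P`:
expanding `∑ᵢ (Vᵢa - PVᵢ)(Vᵢa - PVᵢ)ᴴ` and applying the covariance to each of the four terms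
shows that this sum of positive semidefinite matrices vanishes, so `PVᵢ = Vᵢa` for every `i`.
Then `Φ†(P) = ∑ᵢ Vᵢᴴ P Vᵢ = (∑ᵢ Vᵢᴴ Vᵢ) a = a` by trace preservation. -/

theorem Matrix.eq_zero_of_sum_mul_conjTranspose_eq_zero {ι m n R : Type*}
    [Fintype m] [Fintype n] [PartialOrder R] [CommRing R] [StarRing R] [StarOrderedRing R]
    [NoZeroDivisors R] {s : Finset ι} {M : ι → Matrix m n R}
    (h : ∑ i ∈ s, M i * (M i)ᴴ = 0) : ∀ i ∈ s, M i = 0 := by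
  have htrace : ∑ i ∈ s, (M i * (M i)ᴴ).trace = 0 := by rw [← trace_sum, h, trace_zero]
  intro i hi
  rw [← trace_mul_conjTranspose_self_eq_zero_iff]
  exact (Finset.sum_eq_zero_iff_of_nonneg
    fun j _ => (posSemidef_self_mul_conjTranspose (M j)).trace_nonneg).1 htrace i hi

theorem sum_sub_mul_conjTranspose_sub_eq_krausMap {d n m : ℕ} (V : Fin d → Matrix (Fin m) (Fin n) ℂ)
    (a : Matrix (Fin n) (Fin n) ℂ) (P : Matrix (Fin m) (Fin m) ℂ) :
    ∑ i, (V i * a - P * V i) * (V i * a - P * V i)ᴴ =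
      krausMap V (a * aᴴ) - krausMap V a * Pᴴ - P * krausMap V aᴴ + P * krausMap V 1 * Pᴴ := by
  simp only [krausMap, LinearMap.coe_mk, AddHom.coe_mk, Finset.mul_sum, Finset.sum_mul,
    ← Finset.sum_sub_distrib, ← Finset.sum_add_distrib, conjTranspose_sub, conjTranspose_mul]
  refine Finset.sum_congr rfl fun i _ => ?_
  simp only [Matrix.sub_mul, Matrix.mul_sub, Matrix.mul_assoc, Matrix.mul_one]
  abel

theorem krausMap_intertwines_of_covariant {d n m : ℕ} {V : Fin d → Matrix (Fin m) (Fin n) ℂ}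
    {a : Matrix (Fin n) (Fin n) ℂ} {P : Matrix (Fin m) (Fin m) ℂ}
    (ha : ∀ X, krausMap V (a * X) = P * krausMap V X)
    (ha_star : ∀ X, krausMap V (aᴴ * X) = Pᴴ * krausMap V X) (i : Fin d) :
    P * V i = V i * a := by
  have hzero : ∑ i, (V i * a - P * V i) * (V i * a - P * V i)ᴴ = 0 := by
    have h_a : krausMap V a = P * krausMap V 1 := by simpa using ha 1
    have h_a_star : krausMap V aᴴ = Pᴴ * krausMap V 1 := by simpa using ha_star 1
    rw [sum_sub_mul_conjTranspose_sub_eq_krausMap, ha, h_a, h_a_star]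
    noncomm_ring
  exact (sub_eq_zero.1 (eq_zero_of_sum_mul_conjTranspose_eq_zero hzero i (Finset.mem_univ i))).symm

theorem stmt_5_general {d n : ℕ} (V : Fin d → Matrix (Fin n) (Fin n) ℂ)
    (hV : ∑ i, (V i)ᴴ * V i = 1)
    (A : NonUnitalStarSubalgebra ℂ (Matrix (Fin n) (Fin n) ℂ))
    (π : A →ₗ[ℂ] Matrix (Fin n) (Fin n) ℂ)
    (hπstar : ∀ a : A, π (star a) = (π a)ᴴ)
    (hcov : ∀ (a : A) (X : Matrix (Fin n) (Fin n) ℂ),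
      krausMap V ((a : Matrix (Fin n) (Fin n) ℂ) * X) = π a * krausMap V X) :
    ∀ a : A, ∑ i, (V i)ᴴ * π a * V i = (a : Matrix (Fin n) (Fin n) ℂ) := by
  intro a
  have hcov_star (X : Matrix (Fin n) (Fin n) ℂ) :
      krausMap V ((a : Matrix (Fin n) (Fin n) ℂ)ᴴ * X) = (π a)ᴴ * krausMap V X := by
    rw [← hπstar]
    exact hcov (star a) X
  calc ∑ i, (V i)ᴴ * π a * V i = ∑ i, (V i)ᴴ * V i * a := by
        refine Finset.sum_congr rfl fun i _ => ?_
        rw [mul_assoc, krausMap_intertwines_of_covariant (hcov a) hcov_star i, mul_assoc]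
    _ = a := by rw [← Finset.sum_mul, hV, one_mul]

/-- if `π` is a *-homomorphism on the *-subalgebra `A` with
`Φ(AX) = π(A)Φ(X)` for all `A ∈ A`, `X ∈ M_n`, then `Φ†(π(A)) = A` for all `A ∈ A`. -/
theorem stmt_5 {d n : ℕ} (V : Fin d → Matrix (Fin n) (Fin n) ℂ)
    (hV : ∑ i, (V i)ᴴ * V i = 1)
    (A : NonUnitalStarSubalgebra ℂ (Matrix (Fin n) (Fin n) ℂ))
    (π : A →ₗ[ℂ] Matrix (Fin n) (Fin n) ℂ)
    (hπmul : ∀ a b : A, π (a * b) = π a * π b)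
    (hπstar : ∀ a : A, π (star a) = (π a)ᴴ)
    (hcov : ∀ (a : A) (X : Matrix (Fin n) (Fin n) ℂ),
      krausMap V ((a : Matrix (Fin n) (Fin n) ℂ) * X) = π a * krausMap V X) :
    ∀ a : A, ∑ i, (V i)ᴴ * π a * V i = (a : Matrix (Fin n) (Fin n) ℂ) :=
  stmt_5_general V hV A π hπstar hcov
end

section
/- Let Φ(ρ) = Σ_i V_i ρ V_i* be a trace-preserving completely positive map on M_n, let A be a *-subalgebra of M_n, and let π : A → M_n be a *-homomorphism with Φ(AX) = π(A)Φ(X) and Φ(XA) = Φ(X)π(A) for all A ∈ A, X ∈ M_n. Then for all A ∈ A and all indices i,j, A commutes with V_i* V_j; in particular A ⊆ {V_i* V_j}'_{i,j}. -/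
/-! Covariance of `Φ` under `a ↦ π a` makes the positive sum
`∑ₖ (Vₖ a - π(a) Vₖ)(Vₖ a - π(a) Vₖ)*` collapse to `0`, so every Kraus operator intertwines:
`Vₖ a = π(a) Vₖ`. Applying this to `a*` and taking adjoints gives `a Vᵢ* = Vᵢ* π(a)`, whence
`a Vᵢ* Vⱼ = Vᵢ* π(a) Vⱼ = Vᵢ* Vⱼ a`. -/

open Matrix ComplexOrder

theorem Matrix.eq_zero_of_sum_mul_conjTranspose_self_eq_zero {ι m n R : Type*}
    [Fintype m] [Fintype n] [Ring R] [PartialOrder R] [StarRing R] [StarOrderedRing R]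
    [NoZeroDivisors R] {s : Finset ι} {T : ι → Matrix m n R}
    (hT : ∑ k ∈ s, T k * (T k)ᴴ = 0) {k : ι} (hk : k ∈ s) : T k = 0 := by
  have htrace : ∑ k ∈ s, (T k * (T k)ᴴ).trace = 0 := by rw [← trace_sum, hT, trace_zero]
  rw [Finset.sum_eq_zero_iff_of_nonneg
    fun k _ => (posSemidef_self_mul_conjTranspose (T k)).trace_nonneg] at htrace
  exact trace_mul_conjTranspose_self_eq_zero_iff.mp (htrace k hk)

section Kraus

variable {d n m : ℕ} (V : Fin d → Matrix (Fin m) (Fin n) ℂ)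

theorem sum_sub_mul_conjTranspose_eq_krausMap (a : Matrix (Fin n) (Fin n) ℂ)
    (b : Matrix (Fin m) (Fin m) ℂ) :
    ∑ k, (V k * a - b * V k) * (V k * a - b * V k)ᴴ =
      krausMap V (a * aᴴ) - krausMap V a * bᴴ - b * krausMap V aᴴ + b * krausMap V 1 * bᴴ := by
  simp only [krausMap, LinearMap.coe_mk, AddHom.coe_mk, Finset.mul_sum, Finset.sum_mul,
    ← Finset.sum_sub_distrib, ← Finset.sum_add_distrib]
  refine Finset.sum_congr rfl fun k _ => ?_
  simp only [conjTranspose_sub, conjTranspose_mul, Matrix.mul_one, Matrix.mul_sub,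
    Matrix.sub_mul, Matrix.mul_assoc]
  abel

theorem mul_eq_mul_of_krausMap_covariant {a : Matrix (Fin n) (Fin n) ℂ}
    {b : Matrix (Fin m) (Fin m) ℂ} (hl : ∀ X, krausMap V (a * X) = b * krausMap V X)
    (hr : ∀ X, krausMap V (X * aᴴ) = krausMap V X * bᴴ) (k : Fin d) :
    V k * a = b * V k := by
  have hdefect : ∑ k, (V k * a - b * V k) * (V k * a - b * V k)ᴴ = 0 := by
    have hΦa : krausMap V a = b * krausMap V 1 := by simpa only [mul_one] using hl 1
    have hΦaH : krausMap V aᴴ = krausMap V 1 * bᴴ := by simpa only [one_mul] using hr 1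
    rw [sum_sub_mul_conjTranspose_eq_krausMap, hl, hΦa, hΦaH]
    noncomm_ring
  exact sub_eq_zero.mp <|
    eq_zero_of_sum_mul_conjTranspose_self_eq_zero hdefect (Finset.mem_univ k)

end Kraus

theorem stmt_6_general {d n : ℕ} (V : Fin d → Matrix (Fin n) (Fin n) ℂ)
    (A : NonUnitalStarSubalgebra ℂ (Matrix (Fin n) (Fin n) ℂ))
    (π : A →ₗ[ℂ] Matrix (Fin n) (Fin n) ℂ)
    (hπstar : ∀ a : A, π (star a) = (π a)ᴴ)
    (hcovl : ∀ (a : A) (X : Matrix (Fin n) (Fin n) ℂ),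
      krausMap V ((a : Matrix (Fin n) (Fin n) ℂ) * X) = π a * krausMap V X)
    (hcovr : ∀ (a : A) (X : Matrix (Fin n) (Fin n) ℂ),
      krausMap V (X * (a : Matrix (Fin n) (Fin n) ℂ)) = krausMap V X * π a) :
    ∀ a : A, ∀ i j, (a : Matrix (Fin n) (Fin n) ℂ) * ((V i)ᴴ * V j) =
      ((V i)ᴴ * V j) * (a : Matrix (Fin n) (Fin n) ℂ) := by
  have coe_star (a : A) : ((star a : A) : Matrix (Fin n) (Fin n) ℂ) = (a : Matrix _ _ ℂ)ᴴ := rfl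
  have intertwine (a : A) (k : Fin d) : V k * a = π a * V k :=
    mul_eq_mul_of_krausMap_covariant V (hcovl a)
      (fun X => by simpa only [hπstar, coe_star] using hcovr (star a) X) k
  intro a i j
  have hadj : (a : Matrix (Fin n) (Fin n) ℂ) * (V i)ᴴ = (V i)ᴴ * π a := by
    simpa only [hπstar, coe_star, conjTranspose_mul, conjTranspose_conjTranspose] using
      congrArg conjTranspose (intertwine (star a) i)
  rw [← mul_assoc, hadj, mul_assoc, ← intertwine, mul_assoc]

/-- if `π` is a *-homomorphism on `A` with `Φ(AX) = π(A)Φ(X)` and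
`Φ(XA) = Φ(X)π(A)`, then every `A ∈ A` commutes with every `V_i* V_j`. -/
theorem stmt_6 {d n : ℕ} (V : Fin d → Matrix (Fin n) (Fin n) ℂ)
    (hV : ∑ i, (V i)ᴴ * V i = 1)
    (A : NonUnitalStarSubalgebra ℂ (Matrix (Fin n) (Fin n) ℂ))
    (π : A →ₗ[ℂ] Matrix (Fin n) (Fin n) ℂ)
    (hπmul : ∀ a b : A, π (a * b) = π a * π b)
    (hπstar : ∀ a : A, π (star a) = (π a)ᴴ)
    (hcovl : ∀ (a : A) (X : Matrix (Fin n) (Fin n) ℂ),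
      krausMap V ((a : Matrix (Fin n) (Fin n) ℂ) * X) = π a * krausMap V X)
    (hcovr : ∀ (a : A) (X : Matrix (Fin n) (Fin n) ℂ),
      krausMap V (X * (a : Matrix (Fin n) (Fin n) ℂ)) = krausMap V X * π a) :
    ∀ a : A, ∀ i j, (a : Matrix (Fin n) (Fin n) ℂ) * ((V i)ᴴ * V j) =
      ((V i)ᴴ * V j) * (a : Matrix (Fin n) (Fin n) ℂ) :=
  stmt_6_general V A π hπstar hcovl hcovr
end

section
/- Let Φ(ρ) = Σ_i V_i ρ V_i* be a trace-preserving completely positive map on M_n and let A be a *-subalgebra of M_n contained in the commutant {V_i* V_j}'_{i,j}. Set R = Φ(I) = Σ_i V_i V_i*. Then for all A ∈ A: (1) Φ(A) commutes with R; (2) Φ(A)Φ(X) = R Φ(AX) for all X ∈ M_n; and (3) Φ(X)Φ(A) = Φ(XA) R for all X ∈ M_n. -/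
open Matrix ComplexOrder

/- Expanding a product of two Kraus sums gives `Φ(X) Φ(Y) = ∑ i j, V i X (V iᴴ V j) Y V jᴴ`.
An `a` commuting with every `V iᴴ V j` slides across the middle factor, so `Φ(a) Φ(X)` and
`Φ(1) Φ(a X)` have the same expansion, and symmetrically on the right. -/

section KrausProduct

variable {d n m : ℕ} (V : Fin d → Matrix (Fin m) (Fin n) ℂ)

theorem krausMap_mul_krausMap (X Y : Matrix (Fin n) (Fin n) ℂ) :
    krausMap V X * krausMap V Y = ∑ i, ∑ j, V i * (X * ((V i)ᴴ * V j) * Y) * (V j)ᴴ := by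
  change (∑ i, V i * X * (V i)ᴴ) * (∑ j, V j * Y * (V j)ᴴ) = _
  simp only [Finset.sum_mul_sum, Matrix.mul_assoc]

variable {V} {a : Matrix (Fin n) (Fin n) ℂ}

theorem krausMap_mul_krausMap_eq_krausMap_one_mul (ha : ∀ i j, Commute a ((V i)ᴴ * V j))
    (X : Matrix (Fin n) (Fin n) ℂ) :
    krausMap V a * krausMap V X = krausMap V 1 * krausMap V (a * X) := by
  simp only [krausMap_mul_krausMap, Matrix.one_mul, ← Matrix.mul_assoc, (ha _ _).eq]

theorem krausMap_mul_krausMap_eq_mul_krausMap_one (ha : ∀ i j, Commute a ((V i)ᴴ * V j))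
    (X : Matrix (Fin n) (Fin n) ℂ) :
    krausMap V X * krausMap V a = krausMap V (X * a) * krausMap V 1 := by
  simp only [krausMap_mul_krausMap, Matrix.mul_one, Matrix.mul_assoc, (ha _ _).eq]

theorem commute_krausMap_krausMap_one (ha : ∀ i j, Commute a ((V i)ᴴ * V j)) :
    Commute (krausMap V a) (krausMap V 1) := by
  have h := krausMap_mul_krausMap_eq_krausMap_one_mul ha 1
  rwa [Matrix.mul_one] at h

end KrausProduct

theorem stmt_7_general {d n : ℕ} (V : Fin d → Matrix (Fin n) (Fin n) ℂ)
    (A : NonUnitalStarSubalgebra ℂ (Matrix (Fin n) (Fin n) ℂ))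
    (hA : ∀ a ∈ A, ∀ i j, a * ((V i)ᴴ * V j) = ((V i)ᴴ * V j) * a) :
    ∀ a ∈ A,
      (krausMap V a * krausMap V 1 = krausMap V 1 * krausMap V a) ∧
      (∀ X, krausMap V a * krausMap V X = krausMap V 1 * krausMap V (a * X)) ∧
      (∀ X, krausMap V X * krausMap V a = krausMap V (X * a) * krausMap V 1) := by
  intro a ha
  have hcomm : ∀ i j, Commute a ((V i)ᴴ * V j) := hA a ha
  exact ⟨commute_krausMap_krausMap_one hcomm, krausMap_mul_krausMap_eq_krausMap_one_mul hcomm,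
    krausMap_mul_krausMap_eq_mul_krausMap_one hcomm⟩

/-- if the *-subalgebra `A` lies in the commutant of the `V_i* V_j`, and
`R = Φ(I)`, then `Φ(A)` commutes with `R`, `Φ(A)Φ(X) = R Φ(AX)`, and
`Φ(X)Φ(A) = Φ(XA) R`. -/
theorem stmt_7 {d n : ℕ} (V : Fin d → Matrix (Fin n) (Fin n) ℂ)
    (hV : ∑ i, (V i)ᴴ * V i = 1)
    (A : NonUnitalStarSubalgebra ℂ (Matrix (Fin n) (Fin n) ℂ))
    (hA : ∀ a ∈ A, ∀ i j, a * ((V i)ᴴ * V j) = ((V i)ᴴ * V j) * a) :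
    ∀ a ∈ A,
      (krausMap V a * krausMap V 1 = krausMap V 1 * krausMap V a) ∧
      (∀ X, krausMap V a * krausMap V X = krausMap V 1 * krausMap V (a * X)) ∧
      (∀ X, krausMap V X * krausMap V a = krausMap V (X * a) * krausMap V 1) :=
  stmt_7_general V A hA
end

section
/- Let Φ(ρ) = Σ_i V_i ρ V_i* be a trace-preserving completely positive map on M_n and let A be a *-subalgebra of M_n contained in {V_i* V_j}'. If R = Φ(I) is invertible, then the map π(A) = R^{-1/2} Φ(A) R^{-1/2} is multiplicative on A: π(A)π(B) = π(AB) for all A, B ∈ A, and satisfies Φ(AX) = π(A)Φ(X) and Φ(XA) = Φ(X)π(A) for all X ∈ M_n. -/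
open Matrix ComplexOrder

/-- The positive semidefinite square root, as `Matrix.PosSemidef.sqrt` was defined in the older
Mathlib (since removed). -/
noncomputable def posSemidefSqrt {n : Type*} [Fintype n] [DecidableEq n] {A : Matrix n n ℂ}
    (hA : A.PosSemidef) : Matrix n n ℂ :=
  hA.1.eigenvectorUnitary.1 * diagonal ((↑) ∘ (√·) ∘ hA.1.eigenvalues) *
  (star hA.1.eigenvectorUnitary : Matrix n n ℂ)

/-!
If `a` commutes with every `V_i* V_j`, then `R V_i a = ∑_j V_j a V_j* V_i = Φ(a) V_i` and dually
`a V_i* R = V_i* Φ(a)`. For invertible `R` these give `Φ(aX) = R⁻¹ Φ(a) Φ(X)` and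
`Φ(Xa) = Φ(X) Φ(a) R⁻¹`. Summing the first identity against `V_i*` shows that `Φ(a)` commutes
with `R`, hence with `R^{1/2}` (a continuous function of `R`), so `π(a) = R⁻¹ Φ(a)`, and the
three claims follow.
-/

section PosSemidefSqrt

variable {ι : Type*} [Fintype ι] [DecidableEq ι]

theorem posSemidefSqrt_eq_cfc {A : Matrix ι ι ℂ} (hA : A.PosSemidef) :
    posSemidefSqrt hA = cfc Real.sqrt A := by
  rw [hA.1.cfc_eq, IsHermitian.cfc, Unitary.conjStarAlgAut_apply]
  rfl

theorem posSemidefSqrt_mul_self {A : Matrix ι ι ℂ} (hA : A.PosSemidef) :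
    posSemidefSqrt hA * posSemidefSqrt hA = A := by
  have hsa : IsSelfAdjoint A := hA.1
  rw [posSemidefSqrt_eq_cfc, ← cfc_mul Real.sqrt Real.sqrt A]
  conv_rhs => rw [← cfc_id' ℝ A]
  refine cfc_congr fun x hx => Real.mul_self_sqrt ?_
  obtain ⟨i, rfl⟩ := (hA.1.spectrum_real_eq_range_eigenvalues ▸ hx : x ∈ Set.range _)
  exact hA.eigenvalues_nonneg i

theorem Commute.posSemidefSqrt_right {A B : Matrix ι ι ℂ} (hA : A.PosSemidef)
    (h : Commute B A) :
    Commute B (posSemidefSqrt hA) := by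
  rw [posSemidefSqrt_eq_cfc]
  exact (h.symm.cfc_real Real.sqrt).symm

theorem Matrix.commute_nonsing_inv_right {α : Type*} [CommRing α] {A B : Matrix ι ι α}
    (h : Commute A B) : Commute A B⁻¹ := by
  by_cases hB : IsUnit B.det
  · have hu := (B.isUnit_iff_isUnit_det).mpr hB
    simpa [Matrix.coe_units_inv] using h.units_inv_right (u := hu.unit)
  · rw [nonsing_inv_apply_not_isUnit _ hB]
    exact Commute.zero_right A

theorem posSemidefSqrt_inv_mul_mul_inv {A B : Matrix ι ι ℂ} (hA : A.PosSemidef)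
    (h : Commute B A) :
    (posSemidefSqrt hA)⁻¹ * B * (posSemidefSqrt hA)⁻¹ = A⁻¹ * B := by
  rw [Matrix.mul_assoc, (Matrix.commute_nonsing_inv_right (h.posSemidefSqrt_right hA)).eq,
    ← Matrix.mul_assoc, ← Matrix.mul_inv_rev, posSemidefSqrt_mul_self]

end PosSemidefSqrt

section KrausCommutant

variable {d n m : ℕ} {V : Fin d → Matrix (Fin m) (Fin n) ℂ} {a : Matrix (Fin n) (Fin n) ℂ}

theorem krausMap_apply (V : Fin d → Matrix (Fin m) (Fin n) ℂ) (X : Matrix (Fin n) (Fin n) ℂ) :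
    krausMap V X = ∑ i, V i * X * (V i)ᴴ :=
  rfl

theorem krausMap_one (V : Fin d → Matrix (Fin m) (Fin n) ℂ) :
    krausMap V 1 = ∑ i, V i * (V i)ᴴ := by
  simp only [krausMap_apply, Matrix.mul_one]

theorem krausMap_one_mul_mul_eq (ha : ∀ i j, a * ((V i)ᴴ * V j) = (V i)ᴴ * V j * a)
    (i : Fin d) :
    krausMap V 1 * (V i * a) = krausMap V a * V i := by
  rw [krausMap_one V, krausMap_apply V a, Matrix.sum_mul, Matrix.sum_mul]
  refine Finset.sum_congr rfl fun j _ => ?_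
  calc V j * (V j)ᴴ * (V i * a) = V j * ((V j)ᴴ * V i * a) := by
        simp only [Matrix.mul_assoc]
    _ = V j * a * (V j)ᴴ * V i := by rw [← ha]; simp only [Matrix.mul_assoc]

theorem mul_conjTranspose_mul_krausMap_one (ha : ∀ i j, a * ((V i)ᴴ * V j) = (V i)ᴴ * V j * a)
    (i : Fin d) : a * (V i)ᴴ * krausMap V 1 = (V i)ᴴ * krausMap V a := by
  rw [krausMap_one V, krausMap_apply V a, Matrix.mul_sum, Matrix.mul_sum]
  refine Finset.sum_congr rfl fun j _ => ?_
  calc a * (V i)ᴴ * (V j * (V j)ᴴ) = a * ((V i)ᴴ * V j) * (V j)ᴴ := by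
        simp only [Matrix.mul_assoc]
    _ = (V i)ᴴ * (V j * a * (V j)ᴴ) := by rw [ha]; simp only [Matrix.mul_assoc]

theorem commute_krausMap_one (ha : ∀ i j, a * ((V i)ᴴ * V j) = (V i)ᴴ * V j * a) :
    Commute (krausMap V a) (krausMap V 1) := by
  calc krausMap V a * krausMap V 1 = ∑ i, krausMap V a * V i * (V i)ᴴ := by
        rw [krausMap_one V, Matrix.mul_sum]; simp only [Matrix.mul_assoc]
    _ = ∑ i, krausMap V 1 * (V i * a) * (V i)ᴴ := by simp only [krausMap_one_mul_mul_eq ha]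
    _ = krausMap V 1 * krausMap V a := by
        rw [krausMap_apply V a, Matrix.mul_sum]; simp only [Matrix.mul_assoc]

theorem krausMap_mul_left (ha : ∀ i j, a * ((V i)ᴴ * V j) = (V i)ᴴ * V j * a)
    (hR : IsUnit (krausMap V 1)) (X : Matrix (Fin n) (Fin n) ℂ) :
    krausMap V (a * X) = (krausMap V 1)⁻¹ * krausMap V a * krausMap V X := by
  have hRdet := (Matrix.isUnit_iff_isUnit_det _).mp hR
  rw [krausMap_apply V (a * X), krausMap_apply V X, Matrix.mul_sum]
  refine Finset.sum_congr rfl fun i _ => ?_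
  calc V i * (a * X) * (V i)ᴴ
        = (krausMap V 1)⁻¹ * (krausMap V 1 * (V i * a)) * X * (V i)ᴴ := by
        rw [nonsing_inv_mul_cancel_left _ _ hRdet]; simp only [Matrix.mul_assoc]
    _ = (krausMap V 1)⁻¹ * krausMap V a * (V i * X * (V i)ᴴ) := by
        rw [krausMap_one_mul_mul_eq ha]; simp only [Matrix.mul_assoc]

theorem krausMap_mul_right (ha : ∀ i j, a * ((V i)ᴴ * V j) = (V i)ᴴ * V j * a)
    (hR : IsUnit (krausMap V 1)) (X : Matrix (Fin n) (Fin n) ℂ) :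
    krausMap V (X * a) = krausMap V X * krausMap V a * (krausMap V 1)⁻¹ := by
  have hRdet := (Matrix.isUnit_iff_isUnit_det _).mp hR
  rw [krausMap_apply V (X * a), krausMap_apply V X, Matrix.sum_mul, Matrix.sum_mul]
  refine Finset.sum_congr rfl fun i _ => ?_
  calc V i * (X * a) * (V i)ᴴ
        = V i * X * (a * (V i)ᴴ * krausMap V 1 * (krausMap V 1)⁻¹) := by
        rw [mul_nonsing_inv_cancel_right _ _ hRdet]; simp only [Matrix.mul_assoc]
    _ = V i * X * (V i)ᴴ * krausMap V a * (krausMap V 1)⁻¹ := by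
        rw [mul_conjTranspose_mul_krausMap_one ha]; simp only [Matrix.mul_assoc]

end KrausCommutant

theorem stmt_8_general {d n : ℕ} (V : Fin d → Matrix (Fin n) (Fin n) ℂ)
    (A : NonUnitalStarSubalgebra ℂ (Matrix (Fin n) (Fin n) ℂ))
    (hA : ∀ a ∈ A, ∀ i j, a * ((V i)ᴴ * V j) = ((V i)ᴴ * V j) * a)
    (hR : (krausMap V 1).PosSemidef) (hRinv : IsUnit (krausMap V (1 : Matrix (Fin n) (Fin n) ℂ))) :
    ∀ a ∈ A, ∀ b ∈ A,
      (((posSemidefSqrt hR)⁻¹ * krausMap V a * (posSemidefSqrt hR)⁻¹) * ((posSemidefSqrt hR)⁻¹ * krausMap V b * (posSemidefSqrt hR)⁻¹) =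
        (posSemidefSqrt hR)⁻¹ * krausMap V (a * b) * (posSemidefSqrt hR)⁻¹) ∧
      (∀ X, krausMap V (a * X) = ((posSemidefSqrt hR)⁻¹ * krausMap V a * (posSemidefSqrt hR)⁻¹) * krausMap V X) ∧
      (∀ X, krausMap V (X * a) = krausMap V X * ((posSemidefSqrt hR)⁻¹ * krausMap V a * (posSemidefSqrt hR)⁻¹)) := by
  intro a ha b hb
  have hπ : ∀ c ∈ A, (posSemidefSqrt hR)⁻¹ * krausMap V c * (posSemidefSqrt hR)⁻¹ =
      (krausMap V 1)⁻¹ * krausMap V c := fun c hc =>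
    posSemidefSqrt_inv_mul_mul_inv hR (commute_krausMap_one (hA c hc))
  have hRa : Commute (krausMap V a) (krausMap V 1)⁻¹ :=
    Matrix.commute_nonsing_inv_right (commute_krausMap_one (hA a ha))
  refine ⟨?_, fun X => ?_, fun X => ?_⟩
  · rw [hπ a ha, hπ b hb, hπ (a * b) (mul_mem ha hb), krausMap_mul_left (hA a ha) hRinv b,
      Matrix.mul_assoc _ (krausMap V a), ← Matrix.mul_assoc (krausMap V a), hRa.eq]
  · rw [hπ a ha, krausMap_mul_left (hA a ha) hRinv X]
  · rw [hπ a ha, krausMap_mul_right (hA a ha) hRinv X, Matrix.mul_assoc, hRa.eq]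

/-- if `A ⊆ {V_i* V_j}'` and `R = Φ(I)` is invertible, then
`π(A) = R^{-1/2} Φ(A) R^{-1/2}` is multiplicative on `A` and satisfies
`Φ(AX) = π(A)Φ(X)` and `Φ(XA) = Φ(X)π(A)`. -/
theorem stmt_8 {d n : ℕ} (V : Fin d → Matrix (Fin n) (Fin n) ℂ)
    (hV : ∑ i, (V i)ᴴ * V i = 1)
    (A : NonUnitalStarSubalgebra ℂ (Matrix (Fin n) (Fin n) ℂ))
    (hA : ∀ a ∈ A, ∀ i j, a * ((V i)ᴴ * V j) = ((V i)ᴴ * V j) * a)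
    (hR : (krausMap V 1).PosSemidef) (hRinv : IsUnit (krausMap V (1 : Matrix (Fin n) (Fin n) ℂ))) :
    ∀ a ∈ A, ∀ b ∈ A,
      (((posSemidefSqrt hR)⁻¹ * krausMap V a * (posSemidefSqrt hR)⁻¹) * ((posSemidefSqrt hR)⁻¹ * krausMap V b * (posSemidefSqrt hR)⁻¹) =
        (posSemidefSqrt hR)⁻¹ * krausMap V (a * b) * (posSemidefSqrt hR)⁻¹) ∧
      (∀ X, krausMap V (a * X) = ((posSemidefSqrt hR)⁻¹ * krausMap V a * (posSemidefSqrt hR)⁻¹) * krausMap V X) ∧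
      (∀ X, krausMap V (X * a) = krausMap V X * ((posSemidefSqrt hR)⁻¹ * krausMap V a * (posSemidefSqrt hR)⁻¹)) :=
  stmt_8_general V A hA hR hRinv
end

section
/- Let B be a unital *-subalgebra of M_n and Φ : M_n → M_m a quantum channel. Then Φ privatizes B to a state (i.e., there is a density matrix ρ with Φ(B) = tr(B)ρ for all B ∈ B) if and only if B is quasiorthogonal to the range of Φ†, i.e., tr(B Φ†(X)) = n^{-1} tr(B) tr(Φ†(X)) for all B ∈ B and X ∈ M_m. -/
open Matrix ComplexOrder

/-!
Write `Φ = krausMap V`, so that `Φ† = krausMap (fun i => (V i)ᴴ)` by the trace duality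
`tr(b Φ†(X)) = tr(Φ(b) X)`. Since the trace pairing is nondegenerate, quasiorthogonality of `b`
to the range of `Φ†` says exactly `Φ(b) = n⁻¹ tr(b) Φ(1)`. On the other hand, if `Φ` privatizes
`B ∋ 1` to `ρ`, then `Φ(1) = n ρ`, so privatization to a state is the same identity with
`ρ = n⁻¹ Φ(1)`, which is a state because `Φ` is completely positive and trace preserving.
-/

section krausMap

variable {d n m : ℕ} (V : Fin d → Matrix (Fin m) (Fin n) ℂ)

lemma trace_mul_krausMap_conjTranspose (b : Matrix (Fin n) (Fin n) ℂ)
    (X : Matrix (Fin m) (Fin m) ℂ) :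
    (b * krausMap (fun i => (V i)ᴴ) X).trace = (krausMap V b * X).trace := by
  simp only [krausMap, LinearMap.coe_mk, AddHom.coe_mk, Finset.mul_sum, Finset.sum_mul,
    trace_sum, conjTranspose_conjTranspose]
  refine Finset.sum_congr rfl fun i _ => ?_
  rw [← Matrix.mul_assoc, ← Matrix.mul_assoc, trace_mul_comm]
  simp only [Matrix.mul_assoc]

lemma trace_krausMap_conjTranspose (X : Matrix (Fin m) (Fin m) ℂ) :
    (krausMap (fun i => (V i)ᴴ) X).trace = (krausMap V 1 * X).trace := by
  rw [← trace_mul_krausMap_conjTranspose, Matrix.one_mul]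

lemma trace_krausMap (hV : ∑ i, (V i)ᴴ * V i = 1) (A : Matrix (Fin n) (Fin n) ℂ) :
    (krausMap V A).trace = A.trace := by
  rw [← Matrix.mul_one (krausMap V A), ← trace_mul_krausMap_conjTranspose]
  simp [krausMap, hV]

lemma Matrix.PosSemidef.krausMap {A : Matrix (Fin n) (Fin n) ℂ} (hA : A.PosSemidef) :
    (krausMap V A).PosSemidef := by
  simp only [_root_.krausMap, LinearMap.coe_mk, AddHom.coe_mk]
  exact Finset.sum_induction _ _ (fun _ _ => .add) .zero
    fun i _ => hA.mul_mul_conjTranspose_same (V i)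

lemma trace_mul_krausMap_conjTranspose_eq_iff (b : Matrix (Fin n) (Fin n) ℂ) :
    (∀ X : Matrix (Fin m) (Fin m) ℂ,
        (b * krausMap (fun i => (V i)ᴴ) X).trace =
          (n : ℂ)⁻¹ * b.trace * (krausMap (fun i => (V i)ᴴ) X).trace) ↔
      krausMap V b = ((n : ℂ)⁻¹ * b.trace) • krausMap V 1 := by
  simp only [ext_iff_trace_mul_right, trace_mul_krausMap_conjTranspose,
    trace_krausMap_conjTranspose, Matrix.smul_mul, trace_smul, smul_eq_mul]

lemma exists_krausMap_eq_trace_smul_iff (hn : 0 < n) (hV : ∑ i, (V i)ᴴ * V i = 1)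
    {S : Set (Matrix (Fin n) (Fin n) ℂ)} (hS : 1 ∈ S) :
    (∃ ρ : Matrix (Fin m) (Fin m) ℂ, ρ.PosSemidef ∧ ρ.trace = 1 ∧
        ∀ b ∈ S, krausMap V b = b.trace • ρ) ↔
      ∀ b ∈ S, krausMap V b = ((n : ℂ)⁻¹ * b.trace) • krausMap V 1 := by
  have hn' : (n : ℂ) ≠ 0 := Nat.cast_ne_zero.mpr hn.ne'
  constructor
  · rintro ⟨ρ, -, -, hρ⟩ b hb
    rw [hρ b hb, hρ 1 hS, trace_one, Fintype.card_fin, smul_smul,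
      mul_right_comm, inv_mul_cancel₀ hn', one_mul]
  · intro h
    refine ⟨(n : ℂ)⁻¹ • krausMap V 1, ?_, ?_, fun b hb => ?_⟩
    · exact PosSemidef.one.krausMap V |>.smul (by positivity)
    · rw [trace_smul, trace_krausMap V hV, trace_one, Fintype.card_fin, smul_eq_mul,
        inv_mul_cancel₀ hn']
    · rw [h b hb, smul_smul, mul_comm]

end krausMap

/-- a unital *-subalgebra `B ⊆ M_n` is privatized to a state by the channel
`Φ : M_n → M_m` iff `B` is quasiorthogonal to the range of `Φ†`:
`tr(B Φ†(X)) = n⁻¹ tr(B) tr(Φ†(X))` for all `B ∈ B`, `X ∈ M_m`. -/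
theorem stmt_15 {d n m : ℕ} (hn : 0 < n)
    (V : Fin d → Matrix (Fin m) (Fin n) ℂ)
    (hV : ∑ i, (V i)ᴴ * V i = 1)
    (B : StarSubalgebra ℂ (Matrix (Fin n) (Fin n) ℂ)) :
    (∃ ρ : Matrix (Fin m) (Fin m) ℂ, ρ.PosSemidef ∧ ρ.trace = 1 ∧
        ∀ b ∈ B, krausMap V b = b.trace • ρ) ↔
      (∀ b ∈ B, ∀ X : Matrix (Fin m) (Fin m) ℂ,
        (b * krausMap (fun i => (V i)ᴴ) X).trace =
          (n : ℂ)⁻¹ * b.trace * (krausMap (fun i => (V i)ᴴ) X).trace) := by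
  refine (exists_krausMap_eq_trace_smul_iff V hn hV (S := B) B.one_mem).trans ?_
  exact forall₂_congr fun b _ => (trace_mul_krausMap_conjTranspose_eq_iff V b).symm
end
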